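/- arXiv:math/0505411 — 5 statements merged into one kernel-verified Lean document; each statement's English description precedes it below -/
import Mathlib

section
/- Let $\Omega = \mathbb{N} \setminus \{0\}$ with $\mathcal{F}$ the power set and $\mathbf{P}\{2n-1\} = \mathbf{P}\{2n\} = 2^{-n-1}$ for $n \ge 1$. Define $S_1(2n-1) = 1$, $S_1(2n) = -2^{-n}$. Let $C$ be the set of random variables of the form $\gamma \cdot S_1$ where $\gamma$ is constant on each pair $\{2n-1, 2n\}$ and $\gamma S_1 \in L^\infty$. Then $C \cap L^\infty_+ = \{0\}$, i.e., the no-arbitrage condition holds. -/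
/-!
Under `P` every point `m ≥ 1` has positive mass, so almost sure statements are pointwise
statements on `m ≥ 1`. On a pair `{2n-1, 2n}` the position `γ` is a single number, while `S₁`
takes a positive and a negative value there; a gain `γ S₁` that is nonnegative at both points
therefore forces `γ = 0` on the pair.
-/

open MeasureTheory

/-- The probability measure on `ℕ` with `P{2n-1} = P{2n} = 2^{-n-1}` for `n ≥ 1`. -/
noncomputable def exPMeasure : Measure ℕ :=
  Measure.sum (fun n : ℕ =>
    (if n = 0 then 0 else (2 : ENNReal)⁻¹ ^ ((n + 1) / 2 + 1)) • Measure.dirac n)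

/-- The price increment: `S₁(2n-1) = 1`, `S₁(2n) = -2^{-n}` for `n ≥ 1`. -/
noncomputable def exS1 : ℕ → ℝ :=
  fun m => if m % 2 = 1 then 1 else -((2 : ℝ)⁻¹ ^ (m / 2))

lemma exPMeasure_eq_zero_iff (s : Set ℕ) : exPMeasure s = 0 ↔ ∀ n ∈ s, n = 0 := by
  rw [exPMeasure, Measure.sum_apply _ (MeasurableSet.of_discrete (s := s)), ENNReal.tsum_eq_zero]
  refine forall_congr' fun n => ?_
  rcases eq_or_ne n 0 with rfl | hn
  · simp
  · simp [hn, Measure.dirac_apply' _ (MeasurableSet.of_discrete (s := s))]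

lemma ae_exPMeasure_iff {p : ℕ → Prop} : (∀ᵐ m ∂exPMeasure, p m) ↔ ∀ m, 1 ≤ m → p m := by
  rw [ae_iff, exPMeasure_eq_zero_iff]
  refine forall_congr' fun m => ?_
  by_cases hp : p m <;> simp [hp, Nat.one_le_iff_ne_zero]

lemma exS1_two_mul_sub_one_pos {n : ℕ} (hn : 1 ≤ n) : 0 < exS1 (2 * n - 1) := by
  simp [exS1, show (2 * n - 1) % 2 = 1 by omega]

lemma exS1_two_mul_neg (n : ℕ) : exS1 (2 * n) < 0 := by
  simp [exS1]

lemma eq_zero_of_pairwise_const_of_mul_nonneg {γ S : ℕ → ℝ}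
    (hpair : ∀ n, 1 ≤ n → γ (2 * n - 1) = γ (2 * n))
    (hodd : ∀ n, 1 ≤ n → 0 < S (2 * n - 1)) (heven : ∀ n, 1 ≤ n → S (2 * n) < 0)
    (hnonneg : ∀ m, 1 ≤ m → 0 ≤ γ m * S m) {m : ℕ} (hm : 1 ≤ m) : γ m = 0 := by
  have hpair_zero : ∀ n, 1 ≤ n → γ (2 * n - 1) = 0 ∧ γ (2 * n) = 0 := by
    intro n hn
    have hge : 0 ≤ γ (2 * n - 1) :=
      nonneg_of_mul_nonneg_left (hnonneg _ (by omega)) (hodd n hn)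
    have hle : γ (2 * n) ≤ 0 :=
      nonpos_of_mul_nonneg_left (hnonneg _ (by omega)) (heven n hn)
    rw [hpair n hn] at hge ⊢
    exact ⟨le_antisymm hle hge, le_antisymm hle hge⟩
  rcases Nat.even_or_odd' m with ⟨n, rfl | rfl⟩
  · exact (hpair_zero n (by omega)).2
  · have h := (hpair_zero (n + 1) (by omega)).1
    rwa [show 2 * (n + 1) - 1 = 2 * n + 1 by omega] at h

/-- No-arbitrage: a gain `γ • S₁` with `γ` constant on the pairs `{2n-1, 2n}` which is
a.s. nonnegative is a.s. zero. -/
theorem no_arbitrage_example2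
    (x : ℕ → ℝ) (hx : ∃ γ : ℕ → ℝ, (∀ n : ℕ, 1 ≤ n → γ (2 * n - 1) = γ (2 * n)) ∧
      (∃ M : ℝ, ∀ m : ℕ, |γ m * exS1 m| ≤ M) ∧ x = fun m => γ m * exS1 m)
    (hpos : 0 ≤ᵐ[exPMeasure] x) :
    x =ᵐ[exPMeasure] (0 : ℕ → ℝ) := by
  obtain ⟨γ, hpair, -, rfl⟩ := hx
  have hnonneg : ∀ m, 1 ≤ m → 0 ≤ γ m * exS1 m := ae_exPMeasure_iff.1 hpos
  refine ae_exPMeasure_iff.2 fun m hm => ?_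
  simp [eq_zero_of_pairwise_const_of_mul_nonneg hpair (fun _ => exS1_two_mul_sub_one_pos)
    (fun n _ => exS1_two_mul_neg n) hnonneg hm]
end

section
/- Let $\Omega = \mathbb{N}\setminus\{0\}$, $\mathbf{P}\{2n-1\} = \mathbf{P}\{2n\} = 2^{-n-1}$, $S_1(2n-1) = 1$, $S_1(2n) = -2^{-n}$. Let $f \in L^1_+(\mathbf{P})$ with $\sum_{n=1}^\infty f(2n-1) < \infty$. Define $g(2n-1) = \max\{f(2n-1), 2^{-n} f(2n)\}$ and $g(2n) = 2^n g(2n-1)$. Then $g \in L^1(\mathbf{P})$, $g \ge f$ pointwise, and $\mathbf{E}_\mathbf{P}[g \cdot S_1 \cdot h] = 0$ for every bounded function $h$ constant on each pair $\{2n-1,2n\}$. -/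
/-!
Grouping the atoms of `exPMeasure` in pairs `{2n-1, 2n}`, each pair carrying mass `2^{-n}`,
turns integrals into series `∑ₙ 2^{-n-1} (F(2n-1) + F(2n))`. On a pair, `g S₁` takes the values
`g(2n-1)` and `2ⁿ g(2n-1) · (-2^{-n}) = -g(2n-1)`, so against any `h` constant on pairs every term
of the series vanishes. The pair's contribution to `∫ |g|` is at most
`g(2n-1) ≤ f(2n-1) + 2^{-n} f(2n)`, which is summable: the first term by assumption, the second
because it is at most twice the pair's contribution to `∫ f`.
-/

open MeasureTheory

open scoped ENNReal

theorem MeasureTheory.Measure.sum_nat_eq_sum_pairs {α : Type*} [MeasurableSpace α]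
    (μ : ℕ → Measure α) (h0 : μ 0 = 0) :
    Measure.sum μ = Measure.sum fun k => μ (2 * k + 1) + μ (2 * k + 2) := by
  ext s hs
  rw [Measure.sum_apply _ hs, Measure.sum_apply _ hs,
    ← tsum_even_add_odd ENNReal.summable ENNReal.summable, tsum_eq_zero_add' ENNReal.summable,
    mul_zero, h0, Measure.coe_zero, Pi.zero_apply, zero_add, add_comm, ← ENNReal.tsum_add]
  rfl

section Dirac

variable {α E : Type*} [MeasurableSpace α] [MeasurableSingletonClass α] [NormedAddCommGroup E]

theorem integrable_dirac_add_dirac (F : α → E) (a b : α) :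
    Integrable F (Measure.dirac a + Measure.dirac b) :=
  integrable_add_measure.2 ⟨integrable_dirac (by simp), integrable_dirac (by simp)⟩

theorem integral_dirac_add_dirac [NormedSpace ℝ E] [CompleteSpace E] (F : α → E) (a b : α) :
    ∫ x, F x ∂(Measure.dirac a + Measure.dirac b) = F a + F b := by
  rw [integral_add_measure (integrable_dirac (by simp)) (integrable_dirac (by simp)),
    integral_dirac, integral_dirac]

end Dirac

theorem exPMeasure_eq_sum_pairs :
    exPMeasure = Measure.sum fun k : ℕ =>
      (2⁻¹ : ℝ≥0∞) ^ (k + 2) •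
        (Measure.dirac (2 * (k + 1) - 1) + Measure.dirac (2 * (k + 1))) := by
  rw [exPMeasure, Measure.sum_nat_eq_sum_pairs _ (by simp)]
  congr with k : 1
  have hodd : (2 * k + 1 + 1) / 2 + 1 = k + 2 := by omega
  have heven : (2 * k + 2 + 1) / 2 + 1 = k + 2 := by omega
  rw [if_neg (by omega), if_neg (by omega), hodd, heven, smul_add,
    show 2 * (k + 1) - 1 = 2 * k + 1 by omega, mul_add_one]

theorem integrable_exPMeasure_iff {E : Type*} [NormedAddCommGroup E] (F : ℕ → E) :
    Integrable F exPMeasure ↔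
      Summable fun k : ℕ => (2⁻¹ : ℝ) ^ (k + 2) * (‖F (2 * (k + 1) - 1)‖ + ‖F (2 * (k + 1))‖) := by
  have hpair (k : ℕ) := (integrable_dirac_add_dirac F (2 * (k + 1) - 1) (2 * (k + 1))).smul_measure
    (c := (2⁻¹ : ℝ≥0∞) ^ (k + 2)) (by simp)
  rw [exPMeasure_eq_sum_pairs, integrable_sum_measure_iff, and_iff_right hpair]
  simp only [integral_smul_measure, integral_dirac_add_dirac (fun x => ‖F x‖)]
  simp

theorem integral_exPMeasure {E : Type*} [NormedAddCommGroup E] [NormedSpace ℝ E]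
    [CompleteSpace E] {F : ℕ → E} (hF : Integrable F exPMeasure) :
    ∫ n, F n ∂exPMeasure =
      ∑' k : ℕ, (2⁻¹ : ℝ) ^ (k + 2) • (F (2 * (k + 1) - 1) + F (2 * (k + 1))) := by
  rw [exPMeasure_eq_sum_pairs] at hF ⊢
  simp only [integral_sum_measure hF, integral_smul_measure, integral_dirac_add_dirac]
  simp

theorem exS1_two_mul_sub_one {n : ℕ} (hn : 1 ≤ n) : exS1 (2 * n - 1) = 1 :=
  if_pos (by omega)

theorem exS1_two_mul (n : ℕ) : exS1 (2 * n) = -(2⁻¹ ^ n) := by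
  simp [exS1]

theorem abs_exS1_le_one (m : ℕ) : |exS1 m| ≤ 1 := by
  unfold exS1
  split_ifs
  · simp
  · rw [abs_neg, abs_of_nonneg (by positivity)]
    exact pow_le_one₀ (by norm_num) (by norm_num)

theorem MeasureTheory.Integrable.mul_exS1_mul {μ : Measure ℕ} {g h : ℕ → ℝ} {M : ℝ}
    (hg : Integrable g μ) (hM : ∀ m, |h m| ≤ M) :
    Integrable (fun m => g m * exS1 m * h m) μ := by
  simp only [mul_assoc]
  refine hg.mul_bdd (c := M) .of_discrete (ae_of_all _ fun m => ?_)
  rw [Real.norm_eq_abs, abs_mul]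
  exact (mul_le_mul (abs_exS1_le_one m) (hM m) (abs_nonneg _) zero_le_one).trans_eq (one_mul M)

theorem integral_mul_exS1_mul_eq_zero {g h : ℕ → ℝ}
    (hgeven : ∀ n : ℕ, 1 ≤ n → g (2 * n) = (2 : ℝ) ^ n * g (2 * n - 1))
    (hpair : ∀ n : ℕ, 1 ≤ n → h (2 * n - 1) = h (2 * n))
    (hint : Integrable (fun m => g m * exS1 m * h m) exPMeasure) :
    ∫ m, g m * exS1 m * h m ∂exPMeasure = 0 := by
  rw [integral_exPMeasure hint]
  refine (tsum_congr fun k => ?_).trans tsum_zero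
  have hk : 1 ≤ k + 1 := Nat.le_add_left 1 k
  rw [hgeven _ hk, hpair _ hk, exS1_two_mul_sub_one hk, exS1_two_mul, smul_eq_mul]
  have : (2 : ℝ) ^ (k + 1) * 2⁻¹ ^ (k + 1) = 1 := by rw [← mul_pow]; norm_num
  linear_combination (-(2⁻¹ ^ (k + 2) * g (2 * (k + 1) - 1) * h (2 * (k + 1)))) * this

theorem integrable_of_summable_abs_odd {g : ℕ → ℝ}
    (hgeven : ∀ n : ℕ, 1 ≤ n → g (2 * n) = (2 : ℝ) ^ n * g (2 * n - 1))
    (hsum : Summable fun k : ℕ => |g (2 * (k + 1) - 1)|) :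
    Integrable g exPMeasure := by
  rw [integrable_exPMeasure_iff]
  refine hsum.of_nonneg_of_le (fun k => by positivity) (fun k => ?_)
  rw [hgeven _ (Nat.le_add_left 1 k), Real.norm_eq_abs, Real.norm_eq_abs, abs_mul,
    abs_of_pos (by positivity : (0 : ℝ) < 2 ^ (k + 1))]
  have hw : (2⁻¹ : ℝ) ^ (k + 2) ≤ 2⁻¹ := pow_le_of_le_one (by norm_num) (by norm_num) (by omega)
  have hp : (2⁻¹ : ℝ) ^ (k + 2) * 2 ^ (k + 1) = 2⁻¹ := by
    rw [pow_succ', mul_assoc, ← mul_pow]; norm_num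
  calc (2⁻¹ : ℝ) ^ (k + 2) * (|g (2 * (k + 1) - 1)| + 2 ^ (k + 1) * |g (2 * (k + 1) - 1)|)
      = (2⁻¹ ^ (k + 2) + 2⁻¹) * |g (2 * (k + 1) - 1)| := by
        linear_combination |g (2 * (k + 1) - 1)| * hp
    _ ≤ |g (2 * (k + 1) - 1)| := by nlinarith [abs_nonneg (g (2 * (k + 1) - 1))]

structure IsPairMajorant (f g : ℕ → ℝ) : Prop where
  odd : ∀ n : ℕ, 1 ≤ n → g (2 * n - 1) = max (f (2 * n - 1)) ((2 : ℝ)⁻¹ ^ n * f (2 * n))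
  even : ∀ n : ℕ, 1 ≤ n → g (2 * n) = (2 : ℝ) ^ n * g (2 * n - 1)

namespace IsPairMajorant

variable {f g : ℕ → ℝ}

theorem le (hg : IsPairMajorant f g) {n : ℕ} (hn : 1 ≤ n) : f n ≤ g n := by
  obtain ⟨m, hm, rfl | rfl⟩ : ∃ m, 1 ≤ m ∧ (n = 2 * m - 1 ∨ n = 2 * m) :=
    ⟨(n + 1) / 2, by omega, by omega⟩
  · rw [hg.odd m hm]
    exact le_max_left _ _
  · rw [hg.even m hm, hg.odd m hm]
    calc f (2 * m) = 2 ^ m * (2⁻¹ ^ m * f (2 * m)) := by rw [← mul_assoc, ← mul_pow]; norm_num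
      _ ≤ _ := by gcongr; exact le_max_right _ _

theorem summable_odd (hg : IsPairMajorant f g) (hfpos : ∀ n : ℕ, 1 ≤ n → 0 ≤ f n)
    (hfint : Integrable f exPMeasure) (hfsum : Summable fun n : ℕ => f (2 * (n + 1) - 1)) :
    Summable fun k : ℕ => g (2 * (k + 1) - 1) := by
  rw [integrable_exPMeasure_iff] at hfint
  refine Summable.of_nonneg_of_le (fun k => ?_) (fun k => ?_) (hfsum.add (hfint.mul_left 2))
  · rw [hg.odd _ (Nat.le_add_left 1 k)]
    exact (hfpos _ (by omega)).trans (le_max_left _ _)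
  · have ha := hfpos (2 * (k + 1) - 1) (by omega)
    have hb := hfpos (2 * (k + 1)) (by omega)
    have hw : 2 * (2⁻¹ : ℝ) ^ (k + 2) = 2⁻¹ ^ (k + 1) := by ring
    have hw0 : (0 : ℝ) ≤ 2⁻¹ ^ (k + 1) := by positivity
    rw [hg.odd _ (Nat.le_add_left 1 k), Real.norm_of_nonneg ha, Real.norm_of_nonneg hb,
      ← mul_assoc, hw]
    exact max_le (by nlinarith [mul_nonneg hw0 (add_nonneg ha hb)])
      (by nlinarith [mul_nonneg hw0 ha])

end IsPairMajorant

/-- If `f ∈ L¹₊` with `∑ f(2n-1) < ∞`, then `g` defined by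
`g(2n-1) = max{f(2n-1), 2^{-n} f(2n)}`, `g(2n) = 2ⁿ g(2n-1)` is an integrable
function dominating `f` which lies in the polar of the cone of trading gains. -/
theorem martingale_density_example2
    (f g : ℕ → ℝ)
    (hfint : Integrable f exPMeasure) (hfpos : ∀ n : ℕ, 1 ≤ n → 0 ≤ f n)
    (hfsum : Summable (fun n : ℕ => f (2 * (n + 1) - 1)))
    (hgodd : ∀ n : ℕ, 1 ≤ n →
      g (2 * n - 1) = max (f (2 * n - 1)) ((2 : ℝ)⁻¹ ^ n * f (2 * n)))
    (hgeven : ∀ n : ℕ, 1 ≤ n → g (2 * n) = (2 : ℝ) ^ n * g (2 * n - 1)) :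
    Integrable g exPMeasure ∧
    (∀ n : ℕ, 1 ≤ n → f n ≤ g n) ∧
    ∀ h : ℕ → ℝ, (∀ n : ℕ, 1 ≤ n → h (2 * n - 1) = h (2 * n)) →
      (∃ M : ℝ, ∀ m : ℕ, |h m| ≤ M) →
      Integrable (fun m => g m * exS1 m * h m) exPMeasure ∧
      ∫ m, g m * exS1 m * h m ∂exPMeasure = 0 := by
  have hg : IsPairMajorant f g := ⟨hgodd, hgeven⟩
  have hgint : Integrable g exPMeasure :=
    integrable_of_summable_abs_odd hgeven (hg.summable_odd hfpos hfint hfsum).abs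
  refine ⟨hgint, fun n hn => hg.le hn, fun h hpair ⟨M, hM⟩ => ?_⟩
  have hint := hgint.mul_exS1_mul hM
  exact ⟨hint, integral_mul_exS1_mul_eq_zero hgeven hpair hint⟩
end

section
/- Let $C \subseteq L^\infty(\Omega,\mathcal{F},\mathbf{P})$ be a convex cone with $C \cap L^\infty_+ = \{0\}$ and let $f \in L^1$. If there exists $g \in L^1$ with $g \ge f$ a.s. and $\int_\Omega x g \, d\mathbf{P} \le 0$ for all $x \in C$, then there exists an $N$-function $\varphi$ such that $\sup\{\int_\Omega x f \, d\mathbf{P} : x \in C, \|x^-\|_\varphi \le 1\} < \infty$, where $\|\cdot\|_\varphi$ is the Luxemburg norm. -/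
/-!
Put `d = g - f ≥ 0`. Since `d` is integrable, a de la Vallée-Poussin construction
`ψ t = t + ∑ₖ (t - nₖ)⁺`, with levels `nₖ` whose tail integrals `∫ (d - nₖ)⁺` are summable, gives a
superlinear `ψ` with `ψ t ≥ t` and `ψ ∘ d` integrable. Its Young conjugate
`φ a = sup_{b ≥ 0} (a b - ψ b)` is an N-function, vanishing on `[0, 1]` because `ψ t ≥ t`.
For `x ∈ C` with `‖x⁻‖_φ ≤ 1`, using `∫ x g ≤ 0` and Young's inequality `a b ≤ φ a + ψ b`,
`∫ x f ≤ ∫ x⁻ d ≤ 2 ∫ φ (x⁻ / 2) + 2 ∫ ψ (d) ≤ 2 + 2 ∫ ψ (d)`.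
-/

open MeasureTheory Filter Set

/-- The Luxemburg norm of a function `x` w.r.t. a Young function `φ` and measure `P`. -/
noncomputable def luxemburgNorm {Ω : Type*} [MeasurableSpace Ω] (P : Measure Ω)
    (φ : ℝ → ℝ) (x : Ω → ℝ) : ℝ :=
  sInf {lam : ℝ | 0 < lam ∧ ∫⁻ ω, ENNReal.ofReal (φ (|x ω| / lam)) ∂P ≤ 1}

open scoped Topology

def IsSuperlinear (ψ : ℝ → ℝ) : Prop := ∀ K : ℝ, ∃ c, ∀ t, 0 ≤ t → K * t - c ≤ ψ t

section ValleePoussin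

variable {Ω : Type*} [MeasurableSpace Ω] {μ : Measure Ω} {d : Ω → ℝ}

theorem abs_max_sub_zero_le {t c : ℝ} (hc : 0 ≤ c) : |max (t - c) 0| ≤ |t| := by
  rw [abs_of_nonneg (le_max_right _ _)]
  exact max_le (by linarith [le_abs_self t]) (abs_nonneg t)

theorem integrable_max_sub_const_zero (hd : Integrable d μ) {c : ℝ} (hc : 0 ≤ c) :
    Integrable (fun ω => max (d ω - c) 0) μ :=
  hd.abs.mono' ((hd.1.sub aestronglyMeasurable_const).sup aestronglyMeasurable_const)
    (Eventually.of_forall fun _ => abs_max_sub_zero_le hc)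

theorem tendsto_integral_max_sub_natCast_zero (hd : Integrable d μ) :
    Tendsto (fun m : ℕ => ∫ ω, max (d ω - m) 0 ∂μ) atTop (𝓝 0) := by
  have := tendsto_integral_of_dominated_convergence (fun ω => |d ω|) (f := 0)
    (F := fun (m : ℕ) ω => max (d ω - m) 0)
    (fun m : ℕ => (integrable_max_sub_const_zero hd m.cast_nonneg).1) hd.abs
    (fun m => Eventually.of_forall fun _ => abs_max_sub_zero_le m.cast_nonneg)
    (Eventually.of_forall fun ω => tendsto_atTop_of_eventually_const (i₀ := ⌈d ω⌉₊)
      fun m hm => max_eq_right (sub_nonpos.2 ((Nat.le_ceil (d ω)).trans (Nat.cast_le.2 hm))))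
  simpa using this

theorem exists_levels_integral_max_sub_le (hd : Integrable d μ) :
    ∃ n : ℕ → ℝ, (∀ k : ℕ, (k : ℝ) ≤ n k) ∧ ∀ k, ∫ ω, max (d ω - n k) 0 ∂μ ≤ (1 / 2) ^ k := by
  choose m hm using fun k : ℕ => ((eventually_ge_atTop k).and
    ((tendsto_integral_max_sub_natCast_zero hd).eventually
      (ge_mem_nhds (by positivity : (0 : ℝ) < (1 / 2) ^ k)))).exists
  exact ⟨fun k => m k, fun k => Nat.cast_le.2 (hm k).1, fun k => (hm k).2⟩

noncomputable def valleePoussin (n : ℕ → ℝ) (t : ℝ) : ℝ := ∑' k, max (t - n k) 0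

variable {n : ℕ → ℝ}

theorem summable_max_sub_zero (hn : ∀ k : ℕ, (k : ℝ) ≤ n k) (t : ℝ) :
    Summable fun k => max (t - n k) 0 := by
  refine summable_of_ne_finset_zero (s := Finset.range ⌈t⌉₊) fun k hk => max_eq_right ?_
  simp only [Finset.mem_range, not_lt] at hk
  linarith [Nat.le_ceil t, (Nat.cast_le (α := ℝ)).2 hk, hn k]

theorem valleePoussin_nonneg (t : ℝ) : 0 ≤ valleePoussin n t :=
  tsum_nonneg fun _ => le_max_right _ _

theorem valleePoussin_zero (hn : ∀ k : ℕ, 0 ≤ n k) : valleePoussin n 0 = 0 := by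
  simp [valleePoussin, hn]

theorem monotone_valleePoussin (hn : ∀ k : ℕ, (k : ℝ) ≤ n k) : Monotone (valleePoussin n) :=
  fun s t hst => (summable_max_sub_zero hn s).tsum_le_tsum
    (fun _ => max_le_max (by linarith) le_rfl) (summable_max_sub_zero hn t)

theorem mul_sub_sum_le_valleePoussin (hn : ∀ k : ℕ, (k : ℝ) ≤ n k) (K : ℕ) (t : ℝ) :
    K * t - ∑ j ∈ Finset.range K, n j ≤ valleePoussin n t := by
  calc K * t - ∑ j ∈ Finset.range K, n j = ∑ j ∈ Finset.range K, (t - n j) := by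
        simp [Finset.sum_sub_distrib]
    _ ≤ ∑ j ∈ Finset.range K, max (t - n j) 0 := Finset.sum_le_sum fun _ _ => le_max_left _ _
    _ ≤ valleePoussin n t :=
        (summable_max_sub_zero hn t).sum_le_tsum _ fun _ _ => le_max_right _ _

theorem integrable_valleePoussin_comp (hd : Integrable d μ) (hn : ∀ k : ℕ, (k : ℝ) ≤ n k)
    (hsum : Summable fun k => ∫ ω, max (d ω - n k) 0 ∂μ) :
    Integrable (fun ω => valleePoussin n (d ω)) μ := by
  have hn0 k : 0 ≤ n k := k.cast_nonneg.trans (hn k)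
  have hint k := integrable_max_sub_const_zero hd (hn0 k)
  have hmeas : AEStronglyMeasurable (fun ω => valleePoussin n (d ω)) μ :=
    ((monotone_valleePoussin hn).measurable.comp_aemeasurable
      hd.1.aemeasurable).aestronglyMeasurable
  refine (lintegral_ofReal_ne_top_iff_integrable hmeas
    (Eventually.of_forall fun _ => valleePoussin_nonneg _)).1 (ne_of_lt ?_)
  calc ∫⁻ ω, ENNReal.ofReal (valleePoussin n (d ω)) ∂μ
      = ∑' k, ∫⁻ ω, ENNReal.ofReal (max (d ω - n k) 0) ∂μ := by
        simp_rw [valleePoussin, ENNReal.ofReal_tsum_of_nonneg (fun _ => le_max_right _ _)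
          (summable_max_sub_zero hn _)]
        exact lintegral_tsum fun k => (hint k).1.aemeasurable.ennreal_ofReal
    _ = ENNReal.ofReal (∑' k, ∫ ω, max (d ω - n k) 0 ∂μ) := by
        rw [ENNReal.ofReal_tsum_of_nonneg (fun k => integral_nonneg fun ω =>
          (le_max_right _ _ : (0 : ℝ) ≤ max (d ω - n k) 0)) hsum]
        exact tsum_congr fun k => (ofReal_integral_eq_lintegral_ofReal (hint k)
          (Eventually.of_forall fun _ => le_max_right _ _)).symm
    _ < ⊤ := ENNReal.ofReal_lt_top

theorem exists_superlinear_integrable_comp (hd : Integrable d μ) :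
    ∃ ψ : ℝ → ℝ, ψ 0 = 0 ∧ (∀ t, 0 ≤ t → t ≤ ψ t) ∧
      IsSuperlinear ψ ∧ Integrable (fun ω => ψ (d ω)) μ := by
  obtain ⟨n, hn, hlevel⟩ := exists_levels_integral_max_sub_le hd
  have hsum : Summable fun k => ∫ ω, max (d ω - n k) 0 ∂μ :=
    (summable_geometric_two).of_nonneg_of_le (fun _ => integral_nonneg fun _ => le_max_right _ _)
      (fun k => by simpa using hlevel k)
  refine ⟨fun t => t + valleePoussin n t, ?_, fun t _ => ?_, fun K => ?_,
    hd.add (integrable_valleePoussin_comp hd hn hsum)⟩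
  · simp [valleePoussin_zero fun k => k.cast_nonneg.trans (hn k)]
  · linarith [valleePoussin_nonneg (n := n) t]
  · refine ⟨∑ j ∈ Finset.range ⌈K⌉₊, n j, fun t ht => ?_⟩
    have := mul_sub_sum_le_valleePoussin hn ⌈K⌉₊ t
    nlinarith [Nat.le_ceil K]

end ValleePoussin

noncomputable def youngConjugate (ψ : ℝ → ℝ) (a : ℝ) : ℝ := ⨆ b : Ici (0 : ℝ), (a * b - ψ b)

section YoungConjugate

variable {ψ : ℝ → ℝ}

theorem youngConjugate_le {a c : ℝ} (h : ∀ b, 0 ≤ b → a * b - ψ b ≤ c) : youngConjugate ψ a ≤ c :=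
  ciSup_le fun b => h b b.2

theorem mul_le_youngConjugate_add (hψ : IsSuperlinear ψ)
    (a : ℝ) {b : ℝ} (hb : 0 ≤ b) : a * b ≤ youngConjugate ψ a + ψ b := by
  obtain ⟨c, hc⟩ := hψ a
  have hbdd : BddAbove (range fun b : Ici (0 : ℝ) => a * b - ψ b) :=
    ⟨c, by rintro _ ⟨b, rfl⟩; linarith [hc b b.2]⟩
  have := le_ciSup hbdd (⟨b, hb⟩ : Ici (0 : ℝ))
  rw [youngConjugate]
  linarith

theorem youngConjugate_nonneg (hψ : IsSuperlinear ψ) (hψ0 : ψ 0 = 0)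
    (a : ℝ) : 0 ≤ youngConjugate ψ a := by
  simpa [hψ0] using mul_le_youngConjugate_add hψ a le_rfl

theorem monotone_youngConjugate (hψ : IsSuperlinear ψ) :
    Monotone (youngConjugate ψ) := fun a a' haa' =>
  youngConjugate_le fun b hb => by
    nlinarith [mul_le_youngConjugate_add hψ a' hb, mul_le_mul_of_nonneg_right haa' hb]

theorem convexOn_youngConjugate (hψ : IsSuperlinear ψ) :
    ConvexOn ℝ univ (youngConjugate ψ) := by
  refine ⟨convex_univ, fun x _ y _ s t hs ht hst => youngConjugate_le fun b hb => ?_⟩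
  have hx := mul_le_youngConjugate_add hψ x hb
  have hy := mul_le_youngConjugate_add hψ y hb
  calc (s • x + t • y) * b - ψ b = s * (x * b - ψ b) + t * (y * b - ψ b) := by
        simp only [smul_eq_mul]; linear_combination (ψ b) * hst
    _ ≤ s • youngConjugate ψ x + t • youngConjugate ψ y := by
        simp only [smul_eq_mul]; gcongr <;> linarith

theorem youngConjugate_eq_zero (hψ : IsSuperlinear ψ) (hψ0 : ψ 0 = 0)
    (hψid : ∀ t, 0 ≤ t → t ≤ ψ t) {a : ℝ} (ha : a ≤ 1) : youngConjugate ψ a = 0 :=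
  le_antisymm (youngConjugate_le fun b hb => by nlinarith [hψid b hb])
    (youngConjugate_nonneg hψ hψ0 a)

theorem tendsto_youngConjugate_div_nhdsGT_zero (hψ : IsSuperlinear ψ)
    (hψ0 : ψ 0 = 0) (hψid : ∀ t, 0 ≤ t → t ≤ ψ t) :
    Tendsto (fun t => youngConjugate ψ t / t) (𝓝[>] 0) (𝓝 0) := by
  refine tendsto_const_nhds.congr' ?_
  filter_upwards [Ioo_mem_nhdsGT one_pos] with t ht
  rw [youngConjugate_eq_zero hψ hψ0 hψid ht.2.le, zero_div]

theorem tendsto_youngConjugate_div_atTop (hψ : IsSuperlinear ψ) :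
    Tendsto (fun t => youngConjugate ψ t / t) atTop atTop := by
  refine tendsto_atTop.2 fun B => ?_
  filter_upwards [eventually_ge_atTop (max (ψ (|B| + 1)) 1)] with t ht
  have ht1 : 1 ≤ t := le_of_max_le_right ht
  rw [le_div_iff₀ (by linarith)]
  nlinarith [mul_le_youngConjugate_add hψ t (b := |B| + 1) (by positivity), le_of_max_le_left ht,
    mul_le_mul_of_nonneg_right (le_abs_self B) (by linarith : (0 : ℝ) ≤ t)]

end YoungConjugate

section Luxemburg

variable {Ω : Type*} [MeasurableSpace Ω] {P : Measure Ω} {φ : ℝ → ℝ} {x : Ω → ℝ}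

theorem exists_lintegral_eq_zero_of_ae_abs_le (hφ : ∀ t ∈ Icc (0 : ℝ) 1, φ t = 0) {M : ℝ}
    (hx : ∀ᵐ ω ∂P, |x ω| ≤ M) :
    ∃ lam, 0 < lam ∧ ∫⁻ ω, ENNReal.ofReal (φ (|x ω| / lam)) ∂P = 0 := by
  refine ⟨|M| + 1, by positivity, ?_⟩
  rw [lintegral_congr_ae (g := fun _ => 0), lintegral_zero]
  filter_upwards [hx] with ω hω
  rw [hφ _ ⟨by positivity, (div_le_one (by positivity)).2 (by linarith [le_abs_self M])⟩,
    ENNReal.ofReal_zero]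

-- The admissible `lam` is needed because `luxemburgNorm` is `sInf ∅ = 0` when there is none.
theorem lintegral_le_one_of_luxemburgNorm_lt (hφ : MonotoneOn φ (Ici 0))
    (hx : ∃ lam, 0 < lam ∧ ∫⁻ ω, ENNReal.ofReal (φ (|x ω| / lam)) ∂P ≤ 1) {c : ℝ}
    (hc : luxemburgNorm P φ x < c) : ∫⁻ ω, ENNReal.ofReal (φ (|x ω| / c)) ∂P ≤ 1 := by
  obtain ⟨lam, ⟨hlam, hlam1⟩, hlamc⟩ := (csInf_lt_iff ⟨0, fun _ h => h.1.le⟩ hx).1 hc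
  refine (lintegral_mono fun ω => ENNReal.ofReal_le_ofReal ?_).trans hlam1
  have hc0 : 0 < c := hlam.trans hlamc
  exact hφ (by positivity : 0 ≤ |x ω| / c) (by positivity : 0 ≤ |x ω| / lam)
    (div_le_div_of_nonneg_left (abs_nonneg _) hlam hlamc.le)

theorem lintegral_youngConjugate_half_le_one {ψ : ℝ → ℝ} (hψ : IsSuperlinear ψ) (hψ0 : ψ 0 = 0)
    (hψid : ∀ t, 0 ≤ t → t ≤ ψ t) (hx : MemLp x ⊤ P)
    (hlux : luxemburgNorm P (youngConjugate ψ) x ≤ 1) :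
    ∫⁻ ω, ENNReal.ofReal (youngConjugate ψ (|x ω| / 2)) ∂P ≤ 1 := by
  obtain ⟨lam, hlam, hzero⟩ := exists_lintegral_eq_zero_of_ae_abs_le
    (fun t ht => youngConjugate_eq_zero hψ hψ0 hψid ht.2)
    (ae_le_lpNorm_exponent_top hx : ∀ᵐ ω ∂P, |x ω| ≤ lpNorm x ⊤ P)
  exact lintegral_le_one_of_luxemburgNorm_lt ((monotone_youngConjugate hψ).monotoneOn _)
    ⟨lam, hlam, hzero.trans_le zero_le_one⟩ (hlux.trans_lt one_lt_two)

theorem integrable_and_integral_le_one_of_lintegral_le_one {F : Ω → ℝ}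
    (hF : AEStronglyMeasurable F P) (hF0 : 0 ≤ᵐ[P] F)
    (h : ∫⁻ ω, ENNReal.ofReal (F ω) ∂P ≤ 1) : Integrable F P ∧ ∫ ω, F ω ∂P ≤ 1 := by
  have hint := (lintegral_ofReal_ne_top_iff_integrable hF hF0).1
    (ne_top_of_le_ne_top ENNReal.one_ne_top h)
  refine ⟨hint, ?_⟩
  rwa [← ENNReal.ofReal_le_one, ofReal_integral_eq_lintegral_ofReal hint hF0]

end Luxemburg

theorem integral_mul_le_of_luxemburgNorm_negPart_le_one {Ω : Type*} [MeasurableSpace Ω]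
    {P : Measure Ω} {ψ : ℝ → ℝ} (hψ : IsSuperlinear ψ) (hψ0 : ψ 0 = 0)
    (hψid : ∀ t, 0 ≤ t → t ≤ ψ t) {f g : Ω → ℝ} (hf : Integrable f P) (hg : Integrable g P)
    (hfg : ∀ᵐ ω ∂P, f ω ≤ g ω) (hψg : Integrable (fun ω => ψ (g ω - f ω)) P) {x : Ω → ℝ}
    (hx : MemLp x ⊤ P)
    (hlux : luxemburgNorm P (youngConjugate ψ) (fun ω => max (-x ω) 0) ≤ 1) :
    ∫ ω, x ω * f ω ∂P ≤ ∫ ω, x ω * g ω ∂P + 2 * (1 + ∫ ω, ψ (g ω - f ω) ∂P) := by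
  set φ := youngConjugate ψ
  set u : Ω → ℝ := fun ω => max (-x ω) 0
  have hu : ∀ ω, |u ω| = u ω := fun ω => abs_of_nonneg (le_max_right _ _)
  have hφu : ∫⁻ ω, ENNReal.ofReal (φ (u ω / 2)) ∂P ≤ 1 := by
    convert lintegral_youngConjugate_half_le_one hψ hψ0 hψid hx.neg_part hlux using 6 with ω
    exact (hu ω).symm
  obtain ⟨hφu_int, hφu_le⟩ := integrable_and_integral_le_one_of_lintegral_le_one
    (F := fun ω => φ (u ω / 2))
    ((monotone_youngConjugate hψ).measurable.comp_aemeasurable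
      (hx.neg_part.1.aemeasurable.div_const 2)).aestronglyMeasurable
    (Eventually.of_forall fun ω => youngConjugate_nonneg hψ hψ0 _) hφu
  -- `x f = x g - x (g - f) ≤ x g + 2 (u / 2) (g - f)`, then Young's inequality.
  have hpointwise : ∀ᵐ ω ∂P,
      x ω * f ω ≤ x ω * g ω + (2 * φ (u ω / 2) + 2 * ψ (g ω - f ω)) := by
    filter_upwards [hfg] with ω hω
    have hyoung := mul_le_youngConjugate_add hψ (u ω / 2) (sub_nonneg.2 hω)
    nlinarith [mul_le_mul_of_nonneg_right (le_max_left (-x ω) 0) (sub_nonneg.2 hω)]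
  have hxg : Integrable (fun ω => x ω * g ω) P := hg.mul_of_top_right hx
  have hrest : Integrable (fun ω => 2 * φ (u ω / 2) + 2 * ψ (g ω - f ω)) P :=
    (hφu_int.const_mul 2).add (hψg.const_mul 2)
  calc ∫ ω, x ω * f ω ∂P
      ≤ ∫ ω, (x ω * g ω + (2 * φ (u ω / 2) + 2 * ψ (g ω - f ω))) ∂P :=
        integral_mono_ae (hf.mul_of_top_right hx) (hxg.add hrest) hpointwise
    _ = ∫ ω, x ω * g ω ∂P + (2 * ∫ ω, φ (u ω / 2) ∂P + 2 * ∫ ω, ψ (g ω - f ω) ∂P) := by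
        rw [integral_add hxg hrest, integral_add (hφu_int.const_mul 2) (hψg.const_mul 2),
          integral_const_mul, integral_const_mul]
    _ ≤ ∫ ω, x ω * g ω ∂P + 2 * (1 + ∫ ω, ψ (g ω - f ω) ∂P) := by linarith

theorem exists_Nfunction_bddAbove_general
    {Ω : Type*} [MeasurableSpace Ω] (P : Measure Ω)
    (C : Set (Lp ℝ ⊤ P))
    (f : Ω → ℝ) (hfint : Integrable f P)
    (h : ∃ g : Ω → ℝ, Integrable g P ∧ (∀ᵐ ω ∂P, f ω ≤ g ω) ∧
      ∀ x ∈ C, ∫ ω, (x : Ω → ℝ) ω * g ω ∂P ≤ 0) :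
    ∃ φ : ℝ → ℝ,
      ConvexOn ℝ (Ici (0 : ℝ)) φ ∧
      (∀ t ∈ Ici (0 : ℝ), 0 ≤ φ t) ∧
      Tendsto (fun t => φ t / t) (nhdsWithin 0 (Ioi 0)) (nhds 0) ∧
      Tendsto (fun t => φ t / t) atTop atTop ∧
      BddAbove {r : ℝ | ∃ x ∈ C,
        luxemburgNorm P φ (fun ω => max (-(x : Ω → ℝ) ω) 0) ≤ 1 ∧
        r = ∫ ω, (x : Ω → ℝ) ω * f ω ∂P} := by
  obtain ⟨g, hg, hfg, hgC⟩ := h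
  obtain ⟨ψ, hψ0, hψid, hψ, hψg⟩ := exists_superlinear_integrable_comp (hg.sub hfint)
  refine ⟨youngConjugate ψ, (convexOn_youngConjugate hψ).subset (subset_univ _) (convex_Ici 0),
    fun t _ => youngConjugate_nonneg hψ hψ0 t, tendsto_youngConjugate_div_nhdsGT_zero hψ hψ0 hψid,
    tendsto_youngConjugate_div_atTop hψ, 2 * (1 + ∫ ω, ψ (g ω - f ω) ∂P), ?_⟩
  rintro _ ⟨x, hx, hlux, rfl⟩
  linarith [hgC x hx, integral_mul_le_of_luxemburgNorm_negPart_le_one hψ hψ0 hψid hfint hg hfg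
    hψg (Lp.memLp x) hlux]

/-- If `f ∈ L¹` is dominated by some `g ∈ L¹` lying in the polar of the convex cone
`C ⊆ L∞` (with `C ∩ L∞₊ = {0}`), then there is an `N`-function `φ` such that `f` is
bounded above on `C_φ = {x ∈ C : ‖x⁻‖_φ ≤ 1}`. -/
theorem exists_Nfunction_bddAbove
    {Ω : Type*} [MeasurableSpace Ω] (P : Measure Ω) [IsProbabilityMeasure P]
    (C : Set (Lp ℝ ⊤ P))
    (hCcone : ∀ x ∈ C, ∀ c : ℝ, 0 ≤ c → c • x ∈ C)
    (hCconvex : Convex ℝ C)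
    (hNA : ∀ x ∈ C, 0 ≤ x → x = 0)
    (f : Ω → ℝ) (hfint : Integrable f P)
    (h : ∃ g : Ω → ℝ, Integrable g P ∧ (∀ᵐ ω ∂P, f ω ≤ g ω) ∧
      ∀ x ∈ C, ∫ ω, (x : Ω → ℝ) ω * g ω ∂P ≤ 0) :
    ∃ φ : ℝ → ℝ,
      ConvexOn ℝ (Ici (0 : ℝ)) φ ∧
      (∀ t ∈ Ici (0 : ℝ), 0 ≤ φ t) ∧
      Tendsto (fun t => φ t / t) (nhdsWithin 0 (Ioi 0)) (nhds 0) ∧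
      Tendsto (fun t => φ t / t) atTop atTop ∧
      BddAbove {r : ℝ | ∃ x ∈ C,
        luxemburgNorm P φ (fun ω => max (-(x : Ω → ℝ) ω) 0) ≤ 1 ∧
        r = ∫ ω, (x : Ω → ℝ) ω * f ω ∂P} :=
  exists_Nfunction_bddAbove_general P C f hfint h
end

section
/- Let $X$ be a Banach lattice with dual $X^*$, $C \subseteq X$ a convex cone with $C \cap X_+ = \{0\}$, and $f \in X^*$. Then the following are equivalent: (i) $\sup\{\langle x, f\rangle : x \in C, \|x^-\| \le 1\} < \infty$; (ii) there exists $g \in X^*$ with $g \ge f$ and $\langle x, g\rangle \le 0$ for all $x \in C$. -/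
/-!
Boundedness of `f` on `{x ∈ C : ‖x⁻‖ ≤ 1}` gives `f c ≤ M ‖c⁻‖` on `C`: rescale `c` so that
`‖c⁻‖ = 1`, and if `c⁻ = 0` then `c ∈ C ∩ X₊ = {0}`. With `K = M + ‖f‖`, the functional
`N z = inf {K ‖w‖ - f y : z = c - y + w, c ∈ C, 0 ≤ y}` is then bounded below by
`f z - M ‖z⁻‖`, hence real-valued and sublinear. A linear `g ≤ N` from Hahn–Banach satisfies
`g ≤ K ‖·‖` (so it is continuous), `g c ≤ N c ≤ 0` on `C` and `-g y ≤ N (-y) ≤ -f y` on `X₊`.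
Conversely, if `g ≥ f` on `X₊` and `g ≤ 0` on `C`, then for `x ∈ C`
`f x = g x - (g - f) x⁺ + (g - f) x⁻ ≤ ‖g - f‖ ‖x⁻‖`.
-/

open Filter Topology

lemma inv_two_pow_smul_nonneg {X : Type*} [Lattice X] [AddCommGroup X] [IsOrderedAddMonoid X]
    [Module ℝ X] {x : X} (hx : 0 ≤ x) (k : ℕ) : 0 ≤ ((2 : ℝ) ^ k)⁻¹ • x := by
  induction k with
  | zero => simpa using hx
  | succ k ih =>
    refine nsmul_two_semiclosed ?_
    convert ih using 1
    rw [two_nsmul, ← add_smul]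
    congr 1
    ring

theorem ConvexCone.exists_linearMap_comp_le {E V : Type*} [AddCommGroup E] [Module ℝ E]
    [AddCommGroup V] [Module ℝ V] (P : ConvexCone ℝ V) (A : V →ₗ[ℝ] E) (φ : V → ℝ)
    (φ_smul : ∀ r : ℝ, 0 < r → ∀ v, φ (r • v) = r * φ v) (φ_add : ∀ u v, φ (u + v) ≤ φ u + φ v)
    (hA : ∀ z, ∃ v ∈ P, A v = z) (hφ : ∀ z, BddBelow (φ '' {v | v ∈ P ∧ A v = z})) :
    ∃ g : E →ₗ[ℝ] ℝ, ∀ v ∈ P, g (A v) ≤ φ v := by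
  set S : E → Set ℝ := fun z => φ '' {v | v ∈ P ∧ A v = z}
  have mem_S : ∀ v ∈ P, φ v ∈ S (A v) := fun v hv => ⟨v, ⟨hv, rfl⟩, rfl⟩
  have S_nonempty : ∀ z, (S z).Nonempty := fun z => by
    obtain ⟨v, hv, rfl⟩ := hA z
    exact ⟨_, mem_S v hv⟩
  set N : E → ℝ := fun z => sInf (S z)
  have N_le : ∀ v ∈ P, N (A v) ≤ φ v := fun v hv => csInf_le (hφ _) (mem_S v hv)
  have N_smul_le : ∀ r : ℝ, 0 < r → ∀ z, N (r • z) ≤ r * N z := by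
    intro r hr z
    rw [← smul_eq_mul, ← Real.sInf_smul_of_nonneg hr.le]
    refine csInf_le_csInf (hφ _) (S_nonempty z).smul_set ?_
    rintro _ ⟨_, ⟨v, ⟨hv, rfl⟩, rfl⟩, rfl⟩
    simpa [φ_smul r hr] using mem_S _ (P.smul_mem hr hv)
  have N_smul : ∀ r : ℝ, 0 < r → ∀ z, N (r • z) = r * N z := by
    intro r hr z
    refine le_antisymm (N_smul_le r hr z) ?_
    have := N_smul_le r⁻¹ (inv_pos.2 hr) (r • z)
    rw [inv_smul_smul₀ hr.ne'] at this
    calc r * N z ≤ r * (r⁻¹ * N (r • z)) := by gcongr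
      _ = N (r • z) := by field_simp
  have N_add : ∀ z₁ z₂, N (z₁ + z₂) ≤ N z₁ + N z₂ := by
    intro z₁ z₂
    have key : ∀ t₁ ∈ S z₁, ∀ t₂ ∈ S z₂, N (z₁ + z₂) ≤ t₁ + t₂ := by
      rintro _ ⟨u, ⟨hu, rfl⟩, rfl⟩ _ ⟨v, ⟨hv, rfl⟩, rfl⟩
      rw [← map_add]
      exact (N_le _ (P.add_mem hu hv)).trans (φ_add u v)
    have : N (z₁ + z₂) - N z₂ ≤ N z₁ := le_csInf (S_nonempty z₁) fun t₁ ht₁ =>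
      sub_le_comm.1 (le_csInf (S_nonempty z₂) fun t₂ ht₂ => by linarith [key t₁ ht₁ t₂ ht₂])
    linarith
  have N_zero : N 0 = 0 := by
    have := N_smul 2 two_pos 0
    rw [smul_zero] at this
    linarith
  obtain ⟨g, -, hg⟩ := exists_extension_of_le_sublinear ((0 : E →ₗ[ℝ] ℝ).toPMap ⊥) N N_smul N_add
    (by
      rintro ⟨x, hx⟩
      rw [LinearMap.toPMap_domain, Submodule.mem_bot] at hx
      simp [hx, N_zero])
  exact ⟨g, fun v hv => (hg _).trans (N_le v hv)⟩

lemma Convex.add_mem_of_smul_mem {E : Type*} [AddCommGroup E] [Module ℝ E] {C : Set E}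
    (hC : Convex ℝ C) (hsmul : ∀ x ∈ C, ∀ c : ℝ, 0 ≤ c → c • x ∈ C) {x y : E} (hx : x ∈ C)
    (hy : y ∈ C) : x + y ∈ C := by
  have := hsmul _ (hC hx hy (by norm_num : (0 : ℝ) ≤ 1 / 2) (by norm_num : (0 : ℝ) ≤ 1 / 2)
    (by norm_num)) 2 (by norm_num)
  rwa [smul_add, smul_smul, smul_smul, show (2 : ℝ) * (1 / 2) = 1 by norm_num, one_smul,
    one_smul] at this

section NormedLattice

variable {X : Type*} [NormedAddCommGroup X] [Lattice X] [HasSolidNorm X] [IsOrderedAddMonoid X]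

lemma norm_negPart_le_norm_negPart_sub_add {y : X} (hy : 0 ≤ y) (c w : X) :
    ‖c⁻‖ ≤ ‖(c - y + w)⁻‖ + ‖w‖ := by
  have h_sub : ‖c⁻‖ ≤ ‖(c - y)⁻‖ := by
    refine norm_le_norm_of_abs_le_abs ?_
    rw [abs_of_nonneg (negPart_nonneg _), abs_of_nonneg (negPart_nonneg _)]
    exact negPart_anti (sub_le_self c hy)
  have h_add : ‖(c - y)⁻ - (c - y + w)⁻‖ ≤ ‖w‖ := by
    simpa [dist_eq_norm] using lipschitzWith_negPart.dist_le_mul (c - y) (c - y + w)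
  calc ‖c⁻‖ ≤ ‖(c - y)⁻‖ := h_sub
    _ ≤ ‖(c - y + w)⁻‖ + ‖(c - y)⁻ - (c - y + w)⁻‖ := norm_le_insert' _ _
    _ ≤ ‖(c - y + w)⁻‖ + ‖w‖ := by gcongr

variable [NormedSpace ℝ X]

-- Nonnegativity of dyadic multiples passes to all `r ≥ 0` because the positive cone is closed.
instance HasSolidNorm.isOrderedModule : IsOrderedModule ℝ X := by
  refine .of_smul_nonneg fun r hr x hx => ?_
  have hdyadic : Tendsto (fun n : ℕ => (⌊r * 2 ^ n⌋₊ / 2 ^ n : ℝ)) atTop (𝓝 r) :=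
    (tendsto_nat_floor_mul_div_atTop hr).comp (tendsto_pow_atTop_atTop_of_one_lt one_lt_two)
  refine ge_of_tendsto' (hdyadic.smul_const x) fun n => ?_
  rw [div_eq_mul_inv, mul_smul, Nat.cast_smul_eq_nsmul]
  exact nsmul_nonneg (inv_two_pow_smul_nonneg hx n) _

lemma negPart_smul_of_nonneg {r : ℝ} (hr : 0 ≤ r) (x : X) : (r • x)⁻ = r • x⁻ := by
  rcases hr.eq_or_lt with rfl | hr
  · simp
  have h := (OrderIso.smulRight (β := X) hr).map_sup (-x) 0
  simp only [OrderIso.smulRight_apply, smul_neg, smul_zero] at h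
  rw [negPart_def, negPart_def, h]

theorem exists_le_mul_norm_negPart_of_bddAbove {C : Set X}
    (hCcone : ∀ x ∈ C, ∀ c : ℝ, 0 ≤ c → c • x ∈ C) (hNA : ∀ x ∈ C, 0 ≤ x → x = 0)
    {f : X →L[ℝ] ℝ} (hf : BddAbove {r : ℝ | ∃ x ∈ C, ‖x⁻‖ ≤ 1 ∧ r = f x}) :
    ∃ M, 0 ≤ M ∧ ∀ c ∈ C, f c ≤ M * ‖c⁻‖ := by
  obtain ⟨M, hM⟩ := hf
  refine ⟨max M 0, le_max_right _ _, fun c hc => ?_⟩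
  by_cases hc0 : c⁻ = 0
  · simp [hNA c hc (negPart_eq_zero.1 hc0)]
  have hpos : 0 < ‖c⁻‖ := norm_pos_iff.2 hc0
  have hfc : f (‖c⁻‖⁻¹ • c) ≤ M := by
    refine hM ⟨_, hCcone c hc _ (inv_nonneg.2 hpos.le), ?_, rfl⟩
    rw [negPart_smul_of_nonneg (inv_nonneg.2 hpos.le), norm_smul, norm_inv, norm_norm,
      inv_mul_cancel₀ hpos.ne']
  rw [map_smul, smul_eq_mul, inv_mul_le_iff₀ hpos] at hfc
  calc f c ≤ ‖c⁻‖ * M := hfc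
    _ ≤ max M 0 * ‖c⁻‖ := by rw [mul_comm]; gcongr; exact le_max_left _ _

theorem ConvexCone.exists_dual_ge_nonpos_of_le_mul_norm_negPart (C : ConvexCone ℝ X)
    (hC0 : (0 : X) ∈ C) {f : X →L[ℝ] ℝ} {M : ℝ} (hM : 0 ≤ M) (hfC : ∀ c ∈ C, f c ≤ M * ‖c⁻‖) :
    ∃ g : X →L[ℝ] ℝ, (∀ x, 0 ≤ x → f x ≤ g x) ∧ ∀ x ∈ C, g x ≤ 0 := by
  set K := M + ‖f‖
  let P : ConvexCone ℝ (X × X × X) := C.comap (LinearMap.fst ℝ X (X × X)) ⊓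
    (ConvexCone.positive ℝ X).comap (LinearMap.fst ℝ X X ∘ₗ LinearMap.snd ℝ X (X × X))
  let A : X × X × X →ₗ[ℝ] X := LinearMap.fst ℝ X (X × X) -
    LinearMap.fst ℝ X X ∘ₗ LinearMap.snd ℝ X (X × X) +
    LinearMap.snd ℝ X X ∘ₗ LinearMap.snd ℝ X (X × X)
  have mem_P : ∀ {c y w : X}, (c, y, w) ∈ P ↔ c ∈ C ∧ 0 ≤ y := Iff.rfl
  have A_apply : ∀ c y w : X, A (c, y, w) = c - y + w := fun _ _ _ => rfl
  let φ : X × X × X → ℝ := fun v => K * ‖v.2.2‖ - f v.2.1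
  have φ_smul : ∀ r : ℝ, 0 < r → ∀ v, φ (r • v) = r * φ v := by
    intro r hr v
    simp only [φ, Prod.smul_fst, Prod.smul_snd, norm_smul, Real.norm_eq_abs, abs_of_pos hr,
      map_smul, smul_eq_mul]
    ring
  have φ_add : ∀ u v, φ (u + v) ≤ φ u + φ v := by
    intro u v
    have := mul_le_mul_of_nonneg_left (norm_add_le u.2.2 v.2.2) (by positivity : 0 ≤ K)
    simp only [φ, Prod.snd_add, Prod.fst_add, map_add]
    linarith
  have hA : ∀ z, ∃ v ∈ P, A v = z :=
    fun z => ⟨(0, 0, z), mem_P.2 ⟨hC0, le_rfl⟩, by simp [A_apply]⟩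
  have hφ : ∀ z, BddBelow (φ '' {v | v ∈ P ∧ A v = z}) := by
    refine fun z => ⟨f z - M * ‖z⁻‖, ?_⟩
    rintro _ ⟨⟨c, y, w⟩, ⟨hP, rfl⟩, rfl⟩
    obtain ⟨hc, hy⟩ := mem_P.1 hP
    have h_neg := norm_negPart_le_norm_negPart_sub_add hy c w
    have h_fw : f w ≤ ‖f‖ * ‖w‖ := (le_abs_self _).trans (f.le_opNorm w)
    have := mul_le_mul_of_nonneg_left h_neg hM
    simp only [φ, A_apply, map_add, map_sub]
    linarith [hfC c hc]
  obtain ⟨g, hg⟩ := P.exists_linearMap_comp_le A φ φ_smul φ_add hA hφ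
  have hgP : ∀ c ∈ C, ∀ y, 0 ≤ y → ∀ w, g (c - y + w) ≤ K * ‖w‖ - f y :=
    fun c hc y hy w => hg (c, y, w) (mem_P.2 ⟨hc, hy⟩)
  have hg_le : ∀ w, g w ≤ K * ‖w‖ := fun w => by simpa using hgP 0 hC0 0 le_rfl w
  refine ⟨g.mkContinuous K fun w => ?_, fun x hx => ?_, fun c hc => ?_⟩
  · have := hg_le (-w)
    rw [map_neg, norm_neg] at this
    exact abs_le.2 ⟨by linarith, hg_le w⟩
  · simpa using hgP 0 hC0 x hx 0
  · simpa using hgP c hc 0 le_rfl 0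

end NormedLattice

theorem bddAbove_of_dual_ge_nonpos {X : Type*} [NormedAddCommGroup X] [Lattice X]
    [IsOrderedAddMonoid X] [NormedSpace ℝ X] {C : Set X} {f g : X →L[ℝ] ℝ}
    (hgf : ∀ x, 0 ≤ x → f x ≤ g x) (hgC : ∀ x ∈ C, g x ≤ 0) :
    BddAbove {r : ℝ | ∃ x ∈ C, ‖x⁻‖ ≤ 1 ∧ r = f x} := by
  refine ⟨‖g - f‖, ?_⟩
  rintro _ ⟨x, hx, hx1, rfl⟩
  have h_pos : 0 ≤ (g - f) x⁺ := sub_nonneg.2 (hgf _ (posPart_nonneg x))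
  have h_neg : (g - f) x⁻ ≤ ‖g - f‖ :=
    calc (g - f) x⁻ ≤ ‖g - f‖ * ‖x⁻‖ := (le_abs_self _).trans ((g - f).le_opNorm _)
      _ ≤ ‖g - f‖ := mul_le_of_le_one_right (norm_nonneg _) hx1
  have h_split : g x - f x = (g - f) x⁺ - (g - f) x⁻ := by
    rw [← map_sub, posPart_sub_negPart]
    rfl
  linarith [hgC x hx]

theorem banach_lattice_main_general
    {X : Type*} [NormedAddCommGroup X] [Lattice X] [HasSolidNorm X] [IsOrderedAddMonoid X] [NormedSpace ℝ X]
    (C : Set X)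
    (hCcone : ∀ x ∈ C, ∀ c : ℝ, 0 ≤ c → c • x ∈ C)
    (hCconvex : Convex ℝ C)
    (hNA : ∀ x ∈ C, 0 ≤ x → x = 0)
    (f : X →L[ℝ] ℝ) :
    BddAbove {r : ℝ | ∃ x ∈ C, ‖x⁻‖ ≤ 1 ∧ r = f x} ↔
      ∃ g : X →L[ℝ] ℝ, (∀ x : X, 0 ≤ x → f x ≤ g x) ∧ ∀ x ∈ C, g x ≤ 0 := by
  constructor
  · intro hf
    rcases C.eq_empty_or_nonempty with rfl | ⟨x₀, hx₀⟩
    · exact ⟨f, fun _ _ => le_rfl, by simp⟩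
    obtain ⟨M, hM, hfC⟩ := exists_le_mul_norm_negPart_of_bddAbove hCcone hNA hf
    have hC0 : (0 : X) ∈ C := by simpa using hCcone x₀ hx₀ 0 le_rfl
    let Ccone : ConvexCone ℝ X := ⟨C, fun r hr x hx => hCcone x hx r hr.le,
      fun _ hx _ hy => hCconvex.add_mem_of_smul_mem hCcone hx hy⟩
    exact Ccone.exists_dual_ge_nonpos_of_le_mul_norm_negPart hC0 hM hfC
  · rintro ⟨g, hgf, hgC⟩
    exact bddAbove_of_dual_ge_nonpos hgf hgC

/-- Theorem 1 for Banach lattices: for a convex cone `C` with `C ∩ X₊ = {0}` and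
`f ∈ X*`, boundedness of `f` on `C₁ = {x ∈ C : ‖x⁻‖ ≤ 1}` is equivalent to the
existence of `g ∈ C°` with `g ≥ f`. -/
theorem banach_lattice_main
    {X : Type*} [NormedAddCommGroup X] [Lattice X] [HasSolidNorm X] [IsOrderedAddMonoid X] [NormedSpace ℝ X] [CompleteSpace X]
    (C : Set X)
    (hCcone : ∀ x ∈ C, ∀ c : ℝ, 0 ≤ c → c • x ∈ C)
    (hCconvex : Convex ℝ C)
    (hNA : ∀ x ∈ C, 0 ≤ x → x = 0)
    (f : X →L[ℝ] ℝ) :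
    BddAbove {r : ℝ | ∃ x ∈ C, ‖x⁻‖ ≤ 1 ∧ r = f x} ↔
      ∃ g : X →L[ℝ] ℝ, (∀ x : X, 0 ≤ x → f x ≤ g x) ∧ ∀ x ∈ C, g x ≤ 0 :=
  banach_lattice_main_general C hCcone hCconvex hNA f
end

section
/- Let $\mu$ be a finitely additive $\{0,1\}$-valued measure on the Lebesgue measurable subsets of $[0,1]$, vanishing on Lebesgue-null sets, such that $\mu(I) = 1$ for every open interval $I \subseteq (0,1)$ containing $1/2$. Define $C = \{x \in L^\infty[0,1] : \int x\, d\mathbf{P} + \int x \, d\mu \le 0\}$, where $\mathbf{P}$ is Lebesgue measure. Then for every $M > 0$ and every positive sequence $(\varepsilon_k)$, there exists $x \in C$ with $\mathbf{P}(x^- \ge k) \le \varepsilon_k$ for all $k \ge 1$ and $\int_0^1 x \, d\mathbf{P} > M$; in particular $f = 1$ is unbounded on $\bigcap_k \{x \in C : \mathbf{P}(x^- \ge k) \le \varepsilon_k\}$. -/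
/-!
Take `x = N` on `(0, 1)` away from a short interval `I ∋ 1/2` and `x = -N` on `I`, i.e.
`x = N • (𝟙_(0,1) - 2 • 𝟙_I)`. Since `μ` gives mass `1` to both intervals, `μ x = -N`,
while `∫ x dP = N (1 - 2 |I|)`, so `x ∈ C`. The negative part of `x` lives on `I` and never
exceeds `N`, so taking `N > 2M` and `|I| ≤ min (1/4) (min ε_1 … ε_N)` gives all the
constraints and `∫ x dP > M`.
-/

open MeasureTheory Set

/-- Lebesgue measure on `[0,1]`. -/
noncomputable def PLeb : Measure ℝ := volume.restrict (Set.Icc (0 : ℝ) 1)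

instance : IsProbabilityMeasure PLeb := by
  constructor
  simp [PLeb, Real.volume_Icc]

open Filter Topology

theorem exists_pos_le_forall_finset_le {ι : Type*} (s : Finset ι) {f : ι → ℝ}
    (hf : ∀ i ∈ s, 0 < f i) {b : ℝ} (hb : 0 < b) :
    ∃ δ, 0 < δ ∧ δ ≤ b ∧ ∀ i ∈ s, δ ≤ f i := by
  have hsmall : ∀ᶠ δ in 𝓝[>] (0 : ℝ), δ ≤ b ∧ ∀ i ∈ s, δ ≤ f i :=
    nhdsWithin_le_nhds <| (eventually_le_nhds hb).and <|
      (eventually_all_finset s).2 fun i hi => eventually_le_nhds (hf i hi)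
  obtain ⟨δ, hδ, hδ0⟩ := (hsmall.and self_mem_nhdsWithin).exists
  exact ⟨δ, hδ0, hδ⟩

section

variable {α : Type*} [MeasurableSpace α] {ν : Measure α} [IsFiniteMeasure ν] {s t : Set α}

local notation "𝟙ₗ" hs => indicatorConstLp ⊤ hs (measure_ne_top _ _) (1 : ℝ)

theorem coeFn_smul_sub_two_smul_indicatorConstLp (hs : MeasurableSet s) (ht : MeasurableSet t)
    (c : ℝ) :
    ⇑(c • ((𝟙ₗ hs) - (2 : ℝ) • 𝟙ₗ ht) : Lp ℝ ⊤ ν) =ᵐ[ν]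
      fun ω => s.indicator (fun _ => c) ω - t.indicator (fun _ => 2 * c) ω := by
  filter_upwards [Lp.coeFn_smul c ((𝟙ₗ hs) - (2 : ℝ) • 𝟙ₗ ht : Lp ℝ ⊤ ν),
    Lp.coeFn_sub (𝟙ₗ hs : Lp ℝ ⊤ ν) ((2 : ℝ) • 𝟙ₗ ht),
    Lp.coeFn_smul (2 : ℝ) (𝟙ₗ ht : Lp ℝ ⊤ ν),
    (indicatorConstLp_coeFn : ⇑(𝟙ₗ hs : Lp ℝ ⊤ ν) =ᵐ[ν] _),
    (indicatorConstLp_coeFn : ⇑(𝟙ₗ ht : Lp ℝ ⊤ ν) =ᵐ[ν] _)] with ω h₁ h₂ h₃ h₄ h₅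
  simp only [h₁, Pi.smul_apply, h₂, Pi.sub_apply, h₃, h₄, h₅, smul_eq_mul, indicator]
  split_ifs <;> ring

theorem integral_smul_sub_two_smul_indicatorConstLp (hs : MeasurableSet s)
    (ht : MeasurableSet t) (c : ℝ) :
    ∫ ω, (c • ((𝟙ₗ hs) - (2 : ℝ) • 𝟙ₗ ht) : Lp ℝ ⊤ ν) ω ∂ν = c * (ν.real s - 2 * ν.real t) := by
  rw [integral_congr_ae (coeFn_smul_sub_two_smul_indicatorConstLp hs ht c),
    integral_sub ((integrable_indicator_iff hs).2 (integrableOn_const (measure_ne_top ν s)))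
      ((integrable_indicator_iff ht).2 (integrableOn_const (measure_ne_top ν t))),
    integral_indicator_const _ hs, integral_indicator_const _ ht, smul_eq_mul, smul_eq_mul]
  ring

theorem measure_setOf_le_negPart_smul_sub_two_smul_indicatorConstLp_le (hs : MeasurableSet s)
    (ht : MeasurableSet t) (hts : t ⊆ s) {c k : ℝ} (hc : 0 ≤ c) (hk : 0 < k) :
    ν {ω | k ≤ max (-(c • ((𝟙ₗ hs) - (2 : ℝ) • 𝟙ₗ ht) : Lp ℝ ⊤ ν) ω) 0} ≤
      if k ≤ c then ν t else 0 := by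
  have hsub : ∀ᵐ ω ∂ν, k ≤ max (-(c • ((𝟙ₗ hs) - (2 : ℝ) • 𝟙ₗ ht) : Lp ℝ ⊤ ν) ω) 0 →
      ω ∈ t ∧ k ≤ c := by
    filter_upwards [coeFn_smul_sub_two_smul_indicatorConstLp (ν := ν) hs ht c] with ω hω hkω
    rw [hω] at hkω
    by_cases hωt : ω ∈ t
    · simp only [indicator_of_mem hωt, indicator_of_mem (hts hωt)] at hkω
      exact ⟨hωt, by linarith [max_eq_left (by linarith : (0 : ℝ) ≤ -(c - 2 * c))]⟩
    · rw [indicator_of_notMem hωt, sub_zero] at hkω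
      have hnonpos : -s.indicator (fun _ => c) ω ≤ 0 :=
        neg_nonpos.2 (indicator_nonneg (fun _ _ => hc) ω)
      simp only [max_eq_right hnonpos] at hkω
      linarith
  refine (measure_mono_ae (t := {ω | ω ∈ t ∧ k ≤ c}) hsub).trans_eq ?_
  split_ifs with hkc <;> simp [hkc]

end

theorem PLeb_Ioo {a b : ℝ} (ha : 0 ≤ a) (hb : b ≤ 1) :
    PLeb (Ioo a b) = ENNReal.ofReal (b - a) := by
  rw [PLeb, Measure.restrict_eq_self _ (Ioo_subset_Icc_self.trans (Icc_subset_Icc ha hb)),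
    Real.volume_Ioo]

theorem PLeb_real_Ioo {a b : ℝ} (ha : 0 ≤ a) (hab : a ≤ b) (hb : b ≤ 1) :
    PLeb.real (Ioo a b) = b - a := by
  rw [measureReal_def, PLeb_Ioo ha hb, ENNReal.toReal_ofReal (sub_nonneg.2 hab)]

theorem example1_unbounded_general
    (μ : (Lp ℝ ⊤ PLeb) →L[ℝ] ℝ)
    (hμint : ∀ a b : ℝ, 0 ≤ a → b ≤ 1 → a < 1 / 2 → 1 / 2 < b →
      μ (indicatorConstLp ⊤ (measurableSet_Ioo : MeasurableSet (Set.Ioo a b))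
          (measure_ne_top PLeb _) (1 : ℝ)) = 1)
    (C : Set (Lp ℝ ⊤ PLeb))
    (hC : C = {x : Lp ℝ ⊤ PLeb | ∫ ω, (x : ℝ → ℝ) ω ∂PLeb + μ x ≤ 0})
    (M : ℝ) (ε : ℕ → ℝ) (hε : ∀ k ≥ 1, 0 < ε k) :
    ∃ x ∈ C,
      (∀ k : ℕ, 1 ≤ k →
        PLeb {ω | (k : ℝ) ≤ max (-(x : ℝ → ℝ) ω) 0} ≤ ENNReal.ofReal (ε k)) ∧
      M < ∫ ω, (x : ℝ → ℝ) ω ∂PLeb := by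
  obtain ⟨N, hN⟩ := exists_nat_gt (2 * M)
  obtain ⟨δ, hδ0, hδ8, hδε⟩ := exists_pos_le_forall_finset_le (Finset.Icc 1 N)
    (f := fun k => ε k / 2) (fun k hk => half_pos (hε k (Finset.mem_Icc.1 hk).1))
    (by norm_num : (0 : ℝ) < 1 / 8)
  have hU := hμint 0 1 le_rfl le_rfl (by norm_num) (by norm_num)
  have hI := hμint (1 / 2 - δ) (1 / 2 + δ) (by linarith) (by linarith) (by linarith) (by linarith)
  set x : Lp ℝ ⊤ PLeb := (N : ℝ) •
    (indicatorConstLp ⊤ measurableSet_Ioo (measure_ne_top PLeb (Ioo 0 1)) 1 -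
      (2 : ℝ) • indicatorConstLp ⊤ measurableSet_Ioo
        (measure_ne_top PLeb (Ioo (1 / 2 - δ) (1 / 2 + δ))) 1)
  have hμx : μ x = -N := by
    rw [map_smul, map_sub, map_smul, hU, hI, smul_eq_mul, smul_eq_mul]
    ring
  have hx : ∫ ω, x ω ∂PLeb = N * (1 - 4 * δ) := by
    rw [integral_smul_sub_two_smul_indicatorConstLp, PLeb_real_Ioo le_rfl zero_le_one le_rfl,
      PLeb_real_Ioo (by linarith) (by linarith) (by linarith)]
    ring
  refine ⟨x, ?_, fun k hk => ?_, ?_⟩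
  · rw [hC, mem_ofPred_eq, hx, hμx]
    nlinarith
  · calc PLeb {ω | (k : ℝ) ≤ max (-x ω) 0}
        ≤ if (k : ℝ) ≤ N then PLeb (Ioo (1 / 2 - δ) (1 / 2 + δ)) else 0 :=
          measure_setOf_le_negPart_smul_sub_two_smul_indicatorConstLp_le _ _
            (Ioo_subset_Ioo (by linarith) (by linarith)) N.cast_nonneg (by exact_mod_cast hk)
      _ ≤ ENNReal.ofReal (ε k) := by
        split_ifs with hkN
        · have hδk := hδε k (Finset.mem_Icc.2 ⟨hk, by exact_mod_cast hkN⟩)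
          rw [PLeb_Ioo (by linarith) (by linarith)]
          exact ENNReal.ofReal_le_ofReal (by linarith)
        · exact bot_le
  · rw [hx]
    nlinarith

/-- Example 1: for the cone `C = {x ∈ L∞ : ∫ x dP + μ(x) ≤ 0}` built from a purely
finitely additive `0–1` measure `μ` concentrated near `1/2`, the functional `f = 1`
is unbounded on every set `⋂_k {x ∈ C : P(x⁻ ≥ k) ≤ ε_k}`. -/
theorem example1_unbounded
    (μ : (Lp ℝ ⊤ PLeb) →L[ℝ] ℝ)
    (hμpos : ∀ x : Lp ℝ ⊤ PLeb, 0 ≤ x → 0 ≤ μ x)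
    (hμ01 : ∀ (s : Set ℝ) (hs : MeasurableSet s),
      μ (indicatorConstLp ⊤ hs (measure_ne_top PLeb s) (1 : ℝ)) = 0 ∨
      μ (indicatorConstLp ⊤ hs (measure_ne_top PLeb s) (1 : ℝ)) = 1)
    (hμint : ∀ a b : ℝ, 0 ≤ a → b ≤ 1 → a < 1 / 2 → 1 / 2 < b →
      μ (indicatorConstLp ⊤ (measurableSet_Ioo : MeasurableSet (Set.Ioo a b))
          (measure_ne_top PLeb _) (1 : ℝ)) = 1)
    (C : Set (Lp ℝ ⊤ PLeb))
    (hC : C = {x : Lp ℝ ⊤ PLeb | ∫ ω, (x : ℝ → ℝ) ω ∂PLeb + μ x ≤ 0})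
    (M : ℝ) (hM : 0 < M) (ε : ℕ → ℝ) (hε : ∀ k ≥ 1, 0 < ε k) :
    ∃ x ∈ C,
      (∀ k : ℕ, 1 ≤ k →
        PLeb {ω | (k : ℝ) ≤ max (-(x : ℝ → ℝ) ω) 0} ≤ ENNReal.ofReal (ε k)) ∧
      M < ∫ ω, (x : ℝ → ℝ) ω ∂PLeb :=
  example1_unbounded_general μ hμint C hC M ε hε
end
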